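/- arXiv:1106.2555 — 3 statements merged into one kernel-verified Lean document; each statement's English description precedes it below -/
import Mathlib

section
/- Let v : ℝⁿ → ℝⁿ be a bounded vector field that is Lipschitz with constant L, let Φ^v_t denote its flow, and let μ, ν ∈ M be two probability measures. Then for every p ≥ 1 and t ≥ 0: W_p(Φ^v_t # μ, Φ^v_t # ν) ≤ e^{((p+1)/p) L t} · W_p(μ, ν). -/
open MeasureTheory Set
open scoped RealInnerProductSpace

noncomputable section

abbrev En (n : ℕ) : Type := EuclideanSpace ℝ (Fin n)

/-- `𝓜`: probability measures on ℝⁿ with compact support, absolutely continuous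
with respect to Lebesgue measure. -/
def MemM (n : ℕ) (μ : Measure (En n)) : Prop :=
  IsProbabilityMeasure μ ∧ μ ≪ (volume : Measure (En n)) ∧
    ∃ K : Set (En n), IsCompact K ∧ μ Kᶜ = 0

/-- A finite positive measure on ℝⁿ, absolutely continuous with respect to Lebesgue
measure and compactly supported. -/
def NiceMeasure (n : ℕ) (μ : Measure (En n)) : Prop :=
  IsFiniteMeasure μ ∧ μ ≪ (volume : Measure (En n)) ∧
    ∃ K : Set (En n), IsCompact K ∧ μ Kᶜ = 0

/-- Wasserstein distance of exponent `p`, in the Monge (transport-map) formulation: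
`W_p(μ,ν) = inf { (∫ ‖γ x - x‖^p dμ)^(1/p) : γ measurable, γ#μ = ν }`. -/
def Wp (n : ℕ) (p : ℝ) (μ ν : Measure (En n)) : ℝ :=
  sInf { c : ℝ | ∃ γ : En n → En n, Measurable γ ∧ Measure.map γ μ = ν ∧
    c = (∫ x, ‖γ x - x‖ ^ p ∂μ) ^ (1 / p) }

/-- `Φ` is the flow of the vector field `v`: `Φ 0 x = x` and `∂ₜ Φ t x = v (Φ t x)`. -/
def IsFlow (n : ℕ) (v : En n → En n) (Φ : ℝ → En n → En n) : Prop :=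
  (∀ x, Φ 0 x = x) ∧ ∀ x t, HasDerivAt (fun s => Φ s x) (v (Φ t x)) t

/-- Hypothesis (H): `v[μ]` is `C¹`, uniformly Lipschitz (constant `L`), uniformly
bounded (constant `M`), and `μ ↦ v[μ]` is Lipschitz from `(𝓜, W_p)` to `C⁰` with
constant `K`. -/
def HypH (n : ℕ) (p : ℝ) (v : Measure (En n) → En n → En n) (L M K : ℝ) : Prop :=
  0 < L ∧ 0 < M ∧ 0 < K ∧
  (∀ μ, MemM n μ → ContDiff ℝ 1 (v μ)) ∧
  (∀ μ, MemM n μ → ∀ x y, ‖v μ x - v μ y‖ ≤ L * ‖x - y‖) ∧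
  (∀ μ, MemM n μ → ∀ x, ‖v μ x‖ ≤ M) ∧
  (∀ μ ν, MemM n μ → MemM n ν → ∀ x, ‖v μ x - v ν x‖ ≤ K * Wp n p μ ν)

/-- Scheme 1 (semi-discrete in time Lagrangian scheme) with time step `Δt` on `[0,T]`:
`μ 0 = μ₀` and, on each interval `[iΔt, (i+1)Δt]`, `μ t` is the push-forward of
`μ (iΔt)` by the flow of the frozen vector field `v[μ (iΔt)]`. -/
def Scheme1 (n : ℕ) (v : Measure (En n) → En n → En n) (μ₀ : Measure (En n))
    (Δt T : ℝ) (μ : ℝ → Measure (En n)) : Prop :=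
  μ 0 = μ₀ ∧
  ∀ i : ℕ, ∀ t : ℝ, (i : ℝ) * Δt ≤ t → t ≤ ((i : ℝ) + 1) * Δt → t ≤ T →
    ∃ Φ : ℝ → En n → En n, IsFlow n (v (μ ((i : ℝ) * Δt))) Φ ∧
      μ t = Measure.map (Φ (t - (i : ℝ) * Δt)) (μ ((i : ℝ) * Δt))

/-- Weak (distributional) solution of `∂ₜ μₜ + ∇·(v[μₜ] μₜ) = 0` on `[0,T]`:
for every test function `f ∈ C_c^∞([0,T] × ℝⁿ)`,
`∫_0^T ∫ (∂ₜ f + v[μₜ]·∇f) dμₜ dt = 0`. -/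
def IsWeakSolution (n : ℕ) (v : Measure (En n) → En n → En n) (T : ℝ)
    (μ : ℝ → Measure (En n)) : Prop :=
  ∀ f : ℝ → En n → ℝ,
    ContDiff ℝ (⊤ : ℕ∞) (Function.uncurry f) →
    HasCompactSupport (Function.uncurry f) →
    (∫ t in Icc (0 : ℝ) T,
      ∫ x, (deriv (fun s => f s x) t + ⟪v (μ t) x, gradient (fun y => f t y) x⟫)
        ∂(μ t)) = 0

/-- Continuity in time with respect to the Wasserstein distance `W_p`, on `[0,T]`. -/
def WpContinuousOn (n : ℕ) (p T : ℝ) (μ : ℝ → Measure (En n)) : Prop :=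
  ∀ t ∈ Icc (0 : ℝ) T, ∀ ε > 0, ∃ δ > 0, ∀ s ∈ Icc (0 : ℝ) T, |s - t| < δ →
    Wp n p (μ s) (μ t) < ε

/-- The axis-parallel grid cell of side `Δx` indexed by `k : Fin n → ℤ`. -/
def gridCell (n : ℕ) (Δx : ℝ) (k : Fin n → ℤ) : Set (En n) :=
  {x | ∀ i, (k i : ℝ) * Δx ≤ x i ∧ x i < ((k i : ℝ) + 1) * Δx}

/-- The index of the grid cell of side `Δx` containing `x`. -/
def gridIdx (n : ℕ) (Δx : ℝ) (x : En n) : Fin n → ℤ := fun i => ⌊x i / Δx⌋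

/-- Grid discretization `G[μ]`: the measure which, on each cell `□` of the grid of
side `Δx`, has constant density `μ(□)/Δxⁿ` with respect to Lebesgue measure. -/
def gridDisc (n : ℕ) (Δx : ℝ) (μ : Measure (En n)) : Measure (En n) :=
  (volume : Measure (En n)).withDensity
    (fun x => μ (gridCell n Δx (gridIdx n Δx x)) / ENNReal.ofReal (Δx ^ n))

/-- `L¹` distance between two measures, via their densities (Radon–Nikodym
derivatives) with respect to Lebesgue measure. -/
def L1dist (n : ℕ) (μ ν : Measure (En n)) : ℝ :=
  ∫ x, |(μ.rnDeriv (volume : Measure (En n)) x).toReal -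
        (ν.rnDeriv (volume : Measure (En n)) x).toReal|

/-!
By Grönwall, the time-`t` map `Φ t` of an `L`-Lipschitz field is `e^{Lt}`-Lipschitz, and by
uniqueness of solutions it is invertible with inverse `Φ (-t)`, the time-`t` map of `-v`, which
is `e^{Lt}`-Lipschitz as well. Conjugating a transport map `γ` from `μ` to `ν` into
`Φ t ∘ γ ∘ Φ (-t)` gives a transport map between the push-forwards whose cost is at most
`e^{Lt}` times that of `γ`, and `e^{Lt} ≤ e^{((p+1)/p) L t}`.
-/
open Function

theorem sInf_le_mul_sInf {S T : Set ℝ} {a : ℝ} (ha : 0 ≤ a) (hS : BddBelow S)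
    (hST : S.Nonempty → T.Nonempty) (hle : ∀ c ∈ T, ∃ c' ∈ S, c' ≤ a * c) :
    sInf S ≤ a * sInf T := by
  rw [← smul_eq_mul, ← Real.sInf_smul_of_nonneg ha]
  rcases T.eq_empty_or_nonempty with rfl | hT
  · rw [Set.not_nonempty_iff_eq_empty.mp (mt hST Set.not_nonempty_empty)]
    simp
  · refine le_csInf hT.smul_set ?_
    rintro _ ⟨c, hc, rfl⟩
    obtain ⟨c', hc', hc'le⟩ := hle c hc
    exact csInf_le_of_le hS hc' hc'le

theorem integral_le_mul_integral_of_le_mul {α : Type*} [MeasurableSpace α] {μ : Measure α}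
    {f g : α → ℝ} {a b : ℝ} (hf : 0 ≤ f) (hg : 0 ≤ g) (hgm : AEStronglyMeasurable g μ)
    (hfg : ∀ x, f x ≤ a * g x) (hgf : ∀ x, g x ≤ b * f x) :
    ∫ x, f x ∂μ ≤ a * ∫ x, g x ∂μ := by
  by_cases hgi : Integrable g μ
  · calc ∫ x, f x ∂μ ≤ ∫ x, a * g x ∂μ :=
          integral_mono_of_nonneg (ae_of_all _ hf) (hgi.const_mul a) (ae_of_all _ hfg)
      _ = a * ∫ x, g x ∂μ := integral_const_mul a g
  · -- `g ≤ b f` transfers non-integrability to `f`, and both integrals take the junk value `0`.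
    have hfi : ¬ Integrable f μ := fun hfi => hgi <| (hfi.const_mul b).mono' hgm <|
      ae_of_all _ fun x => (Real.norm_of_nonneg (hg x)).trans_le (hgf x)
    simp [integral_undef hfi, integral_undef hgi]

theorem integral_norm_sub_rpow_comp_le {α E : Type*} [MeasurableSpace α] {μ : Measure α}
    [SeminormedAddCommGroup E] {p : ℝ} (hp : 0 ≤ p) {T S : E → E} {C C' : NNReal}
    (hT : LipschitzWith C T) (hS : LipschitzWith C' S) (hST : LeftInverse S T)
    {f g : α → E} (hf : AEStronglyMeasurable f μ) (hg : AEStronglyMeasurable g μ) :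
    ∫ x, ‖T (f x) - T (g x)‖ ^ p ∂μ ≤ (C : ℝ) ^ p * ∫ x, ‖f x - g x‖ ^ p ∂μ := by
  refine integral_le_mul_integral_of_le_mul (b := (C' : ℝ) ^ p) (fun x => by positivity)
    (fun x => by positivity) (by fun_prop) (fun x => ?_) (fun x => ?_)
  · rw [← Real.mul_rpow C.coe_nonneg (norm_nonneg _)]
    gcongr
    simpa only [dist_eq_norm] using hT.dist_le_mul (f x) (g x)
  · rw [← Real.mul_rpow C'.coe_nonneg (norm_nonneg _)]
    gcongr
    simpa only [dist_eq_norm, hST (f x), hST (g x)] using hS.dist_le_mul (T (f x)) (T (g x))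

theorem Wp_nonneg (n : ℕ) (p : ℝ) (μ ν : Measure (En n)) : 0 ≤ Wp n p μ ν :=
  Real.sInf_nonneg <| by rintro _ ⟨γ, -, -, rfl⟩; positivity

theorem Wp_of_subsingleton {n : ℕ} [Subsingleton (En n)] {p : ℝ} (hp : p ≠ 0)
    (μ ν : Measure (En n)) : Wp n p μ ν = 0 :=
  le_antisymm (Real.sInf_nonpos <| by
    rintro _ ⟨γ, -, -, rfl⟩
    have hγ : ∀ x, γ x = x := fun x => Subsingleton.elim _ _
    simp [hγ, hp]) (Wp_nonneg n p μ ν)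

/-- Conjugation `γ ↦ T ∘ γ ∘ S` sends transport maps `μ → ν` to transport maps `T#μ → T#ν`;
it is onto since `γ' ↦ S ∘ γ' ∘ T` goes back, so the junk value `sInf ∅ = 0` occurs on
both sides together. -/
theorem Wp_map_le {n : ℕ} {p : ℝ} (hp : 0 < p) {T S : En n → En n} {C C' : NNReal}
    (hT : LipschitzWith C T) (hS : LipschitzWith C' S) (hST : LeftInverse S T)
    (μ ν : Measure (En n)) :
    Wp n p (μ.map T) (ν.map T) ≤ C * Wp n p μ ν := by
  have hTm : Measurable T := hT.continuous.measurable
  have hSm : Measurable S := hS.continuous.measurable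
  refine sInf_le_mul_sInf C.coe_nonneg ⟨0, by rintro _ ⟨γ, -, -, rfl⟩; positivity⟩ ?_ ?_
  · rintro ⟨_, γ, hγm, hγ, rfl⟩
    refine ⟨_, S ∘ γ ∘ T, hSm.comp (hγm.comp hTm), ?_, rfl⟩
    rw [← Measure.map_map hSm (hγm.comp hTm), ← Measure.map_map hγm hTm, hγ,
      Measure.map_map hSm hTm, hST.comp_eq_id, Measure.map_id]
  · rintro _ ⟨γ, hγm, hγ, rfl⟩
    refine ⟨_, ⟨T ∘ γ ∘ S, hTm.comp (hγm.comp hSm), ?_, rfl⟩, ?_⟩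
    · rw [Measure.map_map (hTm.comp (hγm.comp hSm)) hTm, comp_assoc, comp_assoc,
        hST.comp_eq_id, comp_id, ← Measure.map_map hTm hγm, hγ]
    have hcost : ∫ x, ‖(T ∘ γ ∘ S) x - x‖ ^ p ∂(μ.map T) = ∫ x, ‖T (γ x) - T x‖ ^ p ∂μ := by
      rw [integral_map hTm.aemeasurable (by fun_prop (disch := exact hp.le))]
      simp only [comp_apply, hST _]
    calc (∫ x, ‖(T ∘ γ ∘ S) x - x‖ ^ p ∂(μ.map T)) ^ (1 / p)
        ≤ ((C : ℝ) ^ p * ∫ x, ‖γ x - x‖ ^ p ∂μ) ^ (1 / p) := by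
          rw [hcost]
          gcongr
          exact integral_norm_sub_rpow_comp_le hp.le hT hS hST hγm.aestronglyMeasurable
            aestronglyMeasurable_id
      _ = C * (∫ x, ‖γ x - x‖ ^ p ∂μ) ^ (1 / p) := by
          rw [Real.mul_rpow (by positivity) (by positivity), ← Real.rpow_mul C.coe_nonneg,
            mul_one_div_cancel hp.ne', Real.rpow_one]

section Flow

variable {E : Type*} [NormedAddCommGroup E] [NormedSpace ℝ E] {v : E → E} {K : NNReal}
  {Φ : ℝ → E → E}

theorem flow_add (hv : LipschitzWith K v) (hΦ0 : ∀ x, Φ 0 x = x)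
    (hΦ : ∀ x t, HasDerivAt (fun s => Φ s x) (v (Φ t x)) t) (a b : ℝ) (x : E) :
    Φ (a + b) x = Φ a (Φ b x) := by
  have huniq : (fun s => Φ s x) = fun s => Φ (s - b) (Φ b x) :=
    ODE_solution_unique_univ (v := fun _ => v) (s := fun _ => Set.univ) (t₀ := b)
      (fun _ => hv.lipschitzOnWith) (fun s => ⟨hΦ x s, trivial⟩)
      (fun s => ⟨(hΦ (Φ b x) (s - b)).comp_sub_const s b, trivial⟩) (by simp [hΦ0])
  simpa using congrFun huniq (a + b)

theorem leftInverse_flow_neg (hv : LipschitzWith K v) (hΦ0 : ∀ x, Φ 0 x = x)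
    (hΦ : ∀ x t, HasDerivAt (fun s => Φ s x) (v (Φ t x)) t) (t : ℝ) :
    LeftInverse (Φ (-t)) (Φ t) := fun x => by
  rw [← flow_add hv hΦ0 hΦ, neg_add_cancel, hΦ0]

theorem lipschitzWith_flow (hv : LipschitzWith K v) (hΦ0 : ∀ x, Φ 0 x = x)
    (hΦ : ∀ x t, HasDerivAt (fun s => Φ s x) (v (Φ t x)) t) {t : ℝ} (ht : 0 ≤ t) :
    LipschitzWith (Real.exp (K * t)).toNNReal (Φ t) :=
  LipschitzWith.of_dist_le_mul fun x y => by
    rw [Real.coe_toNNReal _ (Real.exp_nonneg _)]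
    have := dist_le_of_trajectories_ODE (v := fun _ => v) (fun _ => hv)
      (fun s _ => (hΦ x s).continuousAt.continuousWithinAt) (fun s _ => (hΦ x s).hasDerivWithinAt)
      (fun s _ => (hΦ y s).continuousAt.continuousWithinAt) (fun s _ => (hΦ y s).hasDerivWithinAt)
      le_rfl t ⟨ht, le_rfl⟩
    simpa [hΦ0, mul_comm] using this

/-- `s ↦ Φ (-s)` is the flow of the (equally Lipschitz) field `-v`. -/
theorem lipschitzWith_flow_neg (hv : LipschitzWith K v) (hΦ0 : ∀ x, Φ 0 x = x)
    (hΦ : ∀ x t, HasDerivAt (fun s => Φ s x) (v (Φ t x)) t) {t : ℝ} (ht : 0 ≤ t) :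
    LipschitzWith (Real.exp (K * t)).toNNReal (Φ (-t)) :=
  lipschitzWith_flow (v := -v) (Φ := fun s => Φ (-s))
    (LipschitzWith.of_dist_le_mul fun x y => by simpa using hv.dist_le_mul x y)
    (by simpa using hΦ0)
    (fun x t => by simpa [comp_def] using (hΦ x (-t)).scomp t (hasDerivAt_neg t)) ht

end Flow

theorem nonneg_of_forall_norm_sub_le_mul {E F : Type*} [NormedAddCommGroup E] [Nontrivial E]
    [SeminormedAddCommGroup F] {f : E → F} {L : ℝ} (hf : ∀ x y, ‖f x - f y‖ ≤ L * ‖x - y‖) :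
    0 ≤ L := by
  obtain ⟨x, y, hxy⟩ := exists_pair_ne E
  exact nonneg_of_mul_nonneg_left ((norm_nonneg _).trans (hf x y))
    (norm_pos_iff.mpr (sub_ne_zero.mpr hxy))

theorem stmt2_general (n : ℕ) (p L t : ℝ) (hp : 1 ≤ p) (ht : 0 ≤ t)
    (v : En n → En n)
    (hvL : ∀ x y, ‖v x - v y‖ ≤ L * ‖x - y‖)
    (Φ : ℝ → En n → En n) (hΦ : IsFlow n v Φ)
    (μ ν : Measure (En n)) :
    Wp n p (Measure.map (Φ t) μ) (Measure.map (Φ t) ν) ≤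
      Real.exp ((p + 1) / p * L * t) * Wp n p μ ν := by
  have hp0 : 0 < p := by linarith
  obtain ⟨hΦ0, hΦ⟩ := hΦ
  rcases subsingleton_or_nontrivial (En n) with _ | _
  · simp [Wp_of_subsingleton hp0.ne']
  have hL : 0 ≤ L := nonneg_of_forall_norm_sub_le_mul hvL
  have hv : LipschitzWith L.toNNReal v := LipschitzWith.of_dist_le_mul fun x y => by
    simpa only [dist_eq_norm, Real.coe_toNNReal L hL] using hvL x y
  have hexp : L * t ≤ (p + 1) / p * L * t := by
    rw [mul_assoc]
    exact le_mul_of_one_le_left (mul_nonneg hL ht) (by rw [le_div_iff₀ hp0]; linarith)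
  calc Wp n p (Measure.map (Φ t) μ) (Measure.map (Φ t) ν)
        ≤ (Real.exp (L.toNNReal * t)).toNNReal * Wp n p μ ν :=
        Wp_map_le hp0 (lipschitzWith_flow hv hΦ0 hΦ ht) (lipschitzWith_flow_neg hv hΦ0 hΦ ht)
          (leftInverse_flow_neg hv hΦ0 hΦ t) μ ν
    _ = Real.exp (L * t) * Wp n p μ ν := by
        rw [Real.coe_toNNReal _ (Real.exp_nonneg _), Real.coe_toNNReal L hL]
    _ ≤ Real.exp ((p + 1) / p * L * t) * Wp n p μ ν := by
        gcongr
        exact Wp_nonneg n p μ ν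

/-- `W_p(Φᵗ#μ, Φᵗ#ν) ≤ e^{((p+1)/p) L t} W_p(μ,ν)` for the flow `Φ` of a bounded
`L`-Lipschitz vector field `v`. -/
theorem stmt2 (n : ℕ) (p L t : ℝ) (hp : 1 ≤ p) (ht : 0 ≤ t)
    (v : En n → En n)
    (hvB : ∃ C : ℝ, ∀ x, ‖v x‖ ≤ C)
    (hvL : ∀ x y, ‖v x - v y‖ ≤ L * ‖x - y‖)
    (Φ : ℝ → En n → En n) (hΦ : IsFlow n v Φ)
    (μ ν : Measure (En n)) (hμ : MemM n μ) (hν : MemM n ν) :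
    Wp n p (Measure.map (Φ t) μ) (Measure.map (Φ t) ν) ≤
      Real.exp ((p + 1) / p * L * t) * Wp n p μ ν :=
  stmt2_general n p L t hp ht v hvL Φ hΦ μ ν

end
end

section
/- Let p ≥ 1, let v satisfy hypothesis (H), let μ₀ ∈ M, and fix T > 0. For each k ∈ ℕ let μ^k ∈ C([0,T], M) be the output of the semi-discrete Lagrangian Scheme 1 with time step Δt = T/2^k. Then {μ^k}_{k∈ℕ} is a Cauchy sequence in C([0,T], M) with respect to the distance d(μ,ν) = sup_{t∈[0,T]} W_p(μ_t, ν_t). -/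
open MeasureTheory Set
open scoped RealInnerProductSpace

noncomputable section

/-!
Write Scheme 1 in Lagrangian form, `μ t = X t # μ₀`, where during the `i`-th step every particle
follows the field `v[μ (iΔ)]` frozen at the start of the step; the maps `X t` are injective and
continuous. Transporting along `Y t ∘ (X t)⁻¹` bounds `W_p(X t # μ₀, Y t # μ₀)` by
`sup ‖X t - Y t‖`. For `k ≤ l` each step of the finer scheme lies in a step of the coarser one,
and there the two frozen fields differ by at most `K (e + M Δ)`: `e` is the current distance
between the particles of the two schemes and `M Δ` bounds how far a particle moves in one coarse
step. Gronwall on each fine step then propagates `e(t) ≤ M Δ (e^{(L+K)t} - 1)`, which tends to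
`0` with `Δ = T / 2ᵏ`.
-/

theorem LipschitzWith.addHaar_image_eq_zero {E : Type*} [NormedAddCommGroup E]
    [NormedSpace ℝ E] [FiniteDimensional ℝ E] [MeasurableSpace E] [BorelSpace E]
    (μ : Measure E) [μ.IsAddHaarMeasure] {C : NNReal} {f : E → E} (hf : LipschitzWith C f)
    {s : Set E} (hs : μ s = 0) : μ (f '' s) = 0 := by
  have hH : (μH[Module.finrank ℝ E] : Measure E) s = 0 :=
    Measure.absolutelyContinuous_isAddHaarMeasure (μH[Module.finrank ℝ E]) μ hs
  refine Measure.absolutelyContinuous_isAddHaarMeasure μ (μH[Module.finrank ℝ E])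
    (le_antisymm ?_ bot_le)
  simpa [hH] using hf.hausdorffMeasure_image_le (Nat.cast_nonneg (Module.finrank ℝ E)) s

namespace IsFlow

variable {n : ℕ} {w : En n → En n} {Φ : ℝ → En n → En n} {C : NNReal}

theorem hasDerivAt_sub (hΦ : IsFlow n w Φ) (x : En n) (a t : ℝ) :
    HasDerivAt (fun s => Φ (s - a) x) (w (Φ (t - a) x)) t :=
  (hΦ.2 x (t - a)).comp_sub_const t a

theorem neg (hΦ : IsFlow n w Φ) : IsFlow n (fun x => -w x) (fun t => Φ (-t)) := by
  refine ⟨fun x => by simpa using hΦ.1 x, fun x t => ?_⟩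
  simpa [Function.comp_def] using (hΦ.2 x (-t)).scomp t (hasDerivAt_neg t)

theorem unique (hw : LipschitzWith C w) {Ψ : ℝ → En n → En n} (hΦ : IsFlow n w Φ)
    (hΨ : IsFlow n w Ψ) : Φ = Ψ := by
  funext t x
  have := ODE_solution_unique_univ (v := fun _ => w) (s := fun _ => univ) (t₀ := 0)
    (fun _ => hw.lipschitzOnWith) (fun s => ⟨hΦ.2 x s, mem_univ _⟩)
    (fun s => ⟨hΨ.2 x s, mem_univ _⟩) (by rw [hΦ.1, hΨ.1])
  exact congrFun this t

theorem apply_add (hw : LipschitzWith C w) (hΦ : IsFlow n w Φ) (s t : ℝ) (x : En n) :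
    Φ (s + t) x = Φ s (Φ t x) := by
  have := ODE_solution_unique_univ (v := fun _ => w) (s := fun _ => univ) (t₀ := 0)
    (f := fun s => Φ (s + t) x) (fun _ => hw.lipschitzOnWith)
    (fun s => ⟨(hΦ.2 x (s + t)).comp_add_const s t, mem_univ _⟩)
    (fun s => ⟨hΦ.2 (Φ t x) s, mem_univ _⟩) (by simp [hΦ.1])
  exact congrFun this s

theorem apply_neg_apply (hw : LipschitzWith C w) (hΦ : IsFlow n w Φ) (t : ℝ) (x : En n) :
    Φ (-t) (Φ t x) = x := by
  rw [← hΦ.apply_add hw, neg_add_cancel, hΦ.1]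

theorem injective (hw : LipschitzWith C w) (hΦ : IsFlow n w Φ) (t : ℝ) :
    Function.Injective (Φ t) :=
  Function.LeftInverse.injective (hΦ.apply_neg_apply hw t)

theorem lipschitzWith (hw : LipschitzWith C w) (hΦ : IsFlow n w Φ) (t : ℝ) :
    LipschitzWith (Real.exp (C * |t|)).toNNReal (Φ t) := by
  have nonneg : ∀ {w : En n → En n} {Φ : ℝ → En n → En n}, LipschitzWith C w → IsFlow n w Φ →
      ∀ t, 0 ≤ t → LipschitzWith (Real.exp (C * |t|)).toNNReal (Φ t) := by
    intro w Φ hw hΦ t ht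
    refine LipschitzWith.of_dist_le_mul fun x y => ?_
    have := dist_le_of_trajectories_ODE (v := fun _ => w) (fun _ => hw)
      (f := fun s => Φ s x) (g := fun s => Φ s y) (a := 0) (b := t) (δ := dist x y)
      (fun s _ => (hΦ.2 x s).continuousAt.continuousWithinAt)
      (fun s _ => (hΦ.2 x s).hasDerivWithinAt)
      (fun s _ => (hΦ.2 y s).continuousAt.continuousWithinAt)
      (fun s _ => (hΦ.2 y s).hasDerivWithinAt)
      (by simp [hΦ.1]) t ⟨ht, le_rfl⟩
    rw [Real.coe_toNNReal _ (Real.exp_nonneg _), mul_comm, abs_of_nonneg ht]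
    simpa using this
  rcases le_total 0 t with ht | ht
  · exact nonneg hw hΦ t ht
  · simpa using nonneg hw.neg hΦ.neg (-t) (neg_nonneg.2 ht)

theorem continuous (hw : LipschitzWith C w) (hΦ : IsFlow n w Φ) (t : ℝ) :
    Continuous (Φ t) :=
  (hΦ.lipschitzWith hw t).continuous

theorem memM_map (hw : LipschitzWith C w) (hΦ : IsFlow n w Φ) {μ : Measure (En n)}
    (hμ : MemM n μ) (t : ℝ) : MemM n (μ.map (Φ t)) := by
  obtain ⟨hprob, hac, S, hS, hSc⟩ := hμ
  have hcont := hΦ.continuous hw t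
  refine ⟨Measure.isProbabilityMeasure_map hcont.aemeasurable, ?_, Φ t '' S, hS.image hcont, ?_⟩
  · refine Measure.AbsolutelyContinuous.mk fun s hs hs0 => ?_
    have hpre : Φ t ⁻¹' s = Φ (-t) '' s := by
      ext x
      refine ⟨fun hx => ⟨Φ t x, hx, hΦ.apply_neg_apply hw t x⟩, ?_⟩
      rintro ⟨y, hy, rfl⟩
      simpa [mem_preimage, ← hΦ.apply_add hw, hΦ.1] using hy
    rw [Measure.map_apply hcont.measurable hs, hpre]
    exact hac ((hΦ.lipschitzWith hw (-t)).addHaar_image_eq_zero volume hs0)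
  · rw [Measure.map_apply hcont.measurable (hS.image hcont).isClosed.measurableSet.compl]
    exact measure_mono_null (fun x hx hxS => hx (mem_image_of_mem _ hxS)) hSc

end IsFlow

theorem Wp_le_of_ae_norm_sub_le {n : ℕ} {p : ℝ} (hp : 0 < p) {μ ν : Measure (En n)}
    [IsProbabilityMeasure μ] {γ : En n → En n} (hγ : Measurable γ) (hγμ : μ.map γ = ν)
    {C : ℝ} (hC : 0 ≤ C) (hbound : ∀ᵐ x ∂μ, ‖γ x - x‖ ≤ C) : Wp n p μ ν ≤ C := by
  have hint : ∫ x, ‖γ x - x‖ ^ p ∂μ ≤ C ^ p := by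
    have := norm_integral_le_of_norm_le_const (μ := μ) (f := fun x => ‖γ x - x‖ ^ p) <| by
      filter_upwards [hbound] with x hx
      rw [Real.norm_of_nonneg (by positivity)]
      exact Real.rpow_le_rpow (norm_nonneg _) hx hp.le
    simpa using (le_abs_self _).trans this
  have hbdd : BddBelow {c : ℝ | ∃ γ : En n → En n, Measurable γ ∧ μ.map γ = ν ∧
      c = (∫ x, ‖γ x - x‖ ^ p ∂μ) ^ (1 / p)} := by
    refine ⟨0, ?_⟩
    rintro _ ⟨γ, -, -, rfl⟩
    positivity
  calc Wp n p μ ν ≤ (∫ x, ‖γ x - x‖ ^ p ∂μ) ^ (1 / p) := csInf_le hbdd ⟨γ, hγ, hγμ, rfl⟩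
    _ ≤ (C ^ p) ^ (1 / p) := by gcongr
    _ = C := by rw [one_div, Real.rpow_rpow_inv hC hp.ne']

theorem Wp_map_le_s9 {n : ℕ} {p : ℝ} (hp : 0 < p) {μ : Measure (En n)} [IsProbabilityMeasure μ]
    {X Y : En n → En n} (hX : Continuous X) (hX_inj : Function.Injective X)
    (hY : Measurable Y) {C : ℝ} (hC : 0 ≤ C) (hXY : ∀ x, ‖Y x - X x‖ ≤ C) :
    Wp n p (μ.map X) (μ.map Y) ≤ C := by
  have hXe : MeasurableEmbedding X := hX.measurableEmbedding hX_inj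
  have : IsProbabilityMeasure (μ.map X) := Measure.isProbabilityMeasure_map hX.aemeasurable
  have hγ := hXe.measurable_extend hY measurable_id
  refine Wp_le_of_ae_norm_sub_le hp hγ ?_ hC ?_
  · rw [Measure.map_map hγ hX.measurable, Function.extend_comp hX_inj]
  · rw [hXe.ae_map_iff]
    exact ae_of_all _ fun x => by simpa [hX_inj.extend_apply] using hXY x

theorem gronwallBound_add_sub_le {c D L K s : ℝ} (hL : 0 < L) (hK : 0 ≤ K) (hcD : c ≤ D)
    (hD : 0 ≤ D) (hs : 0 ≤ s) :
    gronwallBound c L (K * D) s + (D - c) ≤ D * Real.exp ((L + K) * s) := by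
  rw [gronwallBound_of_K_ne_0 hL.ne', add_mul, Real.exp_add]
  set E := Real.exp (L * s)
  have hE : 1 ≤ E := Real.one_le_exp (by positivity)
  have hE_sub : E - 1 ≤ L * s * E := by
    have h := mul_le_mul_of_nonneg_right (Real.add_one_le_exp (-(L * s))) (by positivity : 0 ≤ E)
    rw [← Real.exp_add, neg_add_cancel, Real.exp_zero] at h
    linarith
  have hK_term : K * D / L * (E - 1) ≤ K * D * (s * E) := by
    calc K * D / L * (E - 1) ≤ K * D / L * (L * s * E) := by gcongr
      _ = K * D * (s * E) := by field_simp
  have hc_term : 0 ≤ (D - c) * (E - 1) := mul_nonneg (by linarith) (by linarith)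
  calc c * E + K * D / L * (E - 1) + (D - c)
      ≤ D * E * (K * s + 1) := by linarith
    _ ≤ D * (E * Real.exp (K * s)) := by
        rw [← mul_assoc]; gcongr; exact Real.add_one_le_exp _

theorem HypH.lipschitzWith {n : ℕ} {p L M K : ℝ} {v : Measure (En n) → En n → En n}
    (hH : HypH n p v L M K) {μ : Measure (En n)} (hμ : MemM n μ) :
    LipschitzWith L.toNNReal (v μ) :=
  LipschitzWith.of_dist_le_mul fun x y => by
    simpa [Real.coe_toNNReal _ hH.1.le, dist_eq_norm] using hH.2.2.2.2.1 μ hμ x y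

def extendByFlow {α : Type*} (X : ℝ → α → α) (τ : ℝ) (Φ : ℝ → α → α) (t : ℝ) : α → α :=
  if t ≤ τ then X t else Φ (t - τ) ∘ X τ

section extendByFlow

variable {α : Type*} {X Φ : ℝ → α → α} {τ t : ℝ}

theorem extendByFlow_of_le (h : t ≤ τ) : extendByFlow X τ Φ t = X t :=
  if_pos h

theorem extendByFlow_of_ge (hΦ : ∀ x, Φ 0 x = x) (h : τ ≤ t) :
    extendByFlow X τ Φ t = Φ (t - τ) ∘ X τ := by
  rcases h.eq_or_lt with rfl | h
  · funext x
    simp [extendByFlow, hΦ]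
  · exact if_neg (not_le.2 h)

end extendByFlow

/-- `X` is the Lagrangian map of a curve `μ` computed by Scheme 1 with step `Δ` for `N` steps:
`X t x` is the position at time `t` of the particle of `μ₀` that starts at `x`. -/
structure IsLagrangianRep (n : ℕ) (v : Measure (En n) → En n → En n) (μ₀ : Measure (En n))
    (Δ : ℝ) (N : ℕ) (μ : ℝ → Measure (En n)) (X : ℝ → En n → En n) : Prop where
  apply_zero : ∀ x, X 0 x = x
  continuous : ∀ t ∈ Icc 0 (N * Δ), Continuous (X t)
  injective : ∀ t ∈ Icc 0 (N * Δ), Function.Injective (X t)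
  map_eq : ∀ t ∈ Icc 0 (N * Δ), μ t = μ₀.map (X t)
  memM : ∀ i ≤ N, MemM n (μ (i * Δ))
  hasDerivWithinAt : ∀ i < N, ∀ x, ∀ t ∈ Icc (i * Δ) ((i + 1) * Δ),
    HasDerivWithinAt (fun s => X s x) (v (μ (i * Δ)) (X t x)) (Icc (i * Δ) ((i + 1) * Δ)) t

namespace IsLagrangianRep

variable {n : ℕ} {v : Measure (En n) → En n → En n} {μ₀ : Measure (En n)} {Δ : ℝ} {N : ℕ}
  {μ : ℝ → Measure (En n)} {X : ℝ → En n → En n}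

theorem zero (hμ₀ : μ 0 = μ₀) (h0 : MemM n μ₀) :
    IsLagrangianRep n v μ₀ Δ 0 μ (fun _ x => x) where
  apply_zero _ := rfl
  continuous _ _ := continuous_id
  injective _ _ := Function.injective_id
  map_eq t ht := by
    obtain rfl : t = 0 := by simpa using ht
    rw [hμ₀, Measure.map_id']
  memM i hi := by
    obtain rfl : i = 0 := by omega
    simpa [hμ₀] using h0
  hasDerivWithinAt i hi := absurd hi (Nat.not_lt_zero i)

theorem succ {C : NNReal} (hX : IsLagrangianRep n v μ₀ Δ N μ X) (hΔ : 0 ≤ Δ)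
    (hw : LipschitzWith C (v (μ (N * Δ)))) {Φ : ℝ → En n → En n}
    (hΦ : IsFlow n (v (μ (N * Δ))) Φ)
    (hstep : ∀ t ∈ Icc (N * Δ) ((N + 1) * Δ), μ t = (μ (N * Δ)).map (Φ (t - N * Δ))) :
    IsLagrangianRep n v μ₀ Δ (N + 1) μ (extendByFlow X (N * Δ) Φ) := by
  have hNΔ : (N : ℝ) * Δ ∈ Icc 0 (N * Δ) := ⟨by positivity, le_rfl⟩
  have hcases : ∀ t ∈ Icc (0 : ℝ) ((N + 1 : ℕ) * Δ),
      (t ∈ Icc 0 (N * Δ) ∧ extendByFlow X (N * Δ) Φ t = X t) ∨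
      (t ∈ Icc (N * Δ) ((N + 1) * Δ) ∧
        extendByFlow X (N * Δ) Φ t = Φ (t - N * Δ) ∘ X (N * Δ)) := by
    intro t ⟨h0, h1⟩
    push_cast at h1
    rcases le_total t (N * Δ) with h | h
    · exact .inl ⟨⟨h0, h⟩, extendByFlow_of_le h⟩
    · exact .inr ⟨⟨h, h1⟩, extendByFlow_of_ge hΦ.1 h⟩
  refine ⟨fun x => ?_, fun t ht => ?_, fun t ht => ?_, fun t ht => ?_, fun i hi => ?_,
    fun i hi x t ht => ?_⟩
  · rw [extendByFlow_of_le (by positivity), hX.apply_zero]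
  · rcases hcases t ht with ⟨ht, hY⟩ | ⟨-, hY⟩ <;> rw [hY]
    · exact hX.continuous t ht
    · exact (hΦ.continuous hw _).comp (hX.continuous _ hNΔ)
  · rcases hcases t ht with ⟨ht, hY⟩ | ⟨-, hY⟩ <;> rw [hY]
    · exact hX.injective t ht
    · exact (hΦ.injective hw _).comp (hX.injective _ hNΔ)
  · rcases hcases t ht with ⟨ht, hY⟩ | ⟨ht, hY⟩ <;> rw [hY]
    · exact hX.map_eq t ht
    · rw [hstep t ht, hX.map_eq _ hNΔ,
        Measure.map_map (hΦ.continuous hw _).measurable (hX.continuous _ hNΔ).measurable]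
  · rcases Nat.le_succ_iff.1 hi with hi | rfl
    · exact hX.memM i hi
    · have h := hstep ((N + 1) * Δ) ⟨by nlinarith, le_rfl⟩
      rw [show ((N : ℝ) + 1) * Δ - N * Δ = Δ by ring] at h
      push_cast
      rw [h]
      exact hΦ.memM_map hw (hX.memM N le_rfl) Δ
  · rcases Nat.lt_succ_iff_lt_or_eq.1 hi with hi | rfl
    · have hsub : ∀ s ∈ Icc (i * Δ) ((i + 1) * Δ), s ≤ N * Δ := fun s hs =>
        hs.2.trans (by gcongr; exact_mod_cast hi)
      rw [extendByFlow_of_le (hsub t ht)]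
      exact (hX.hasDerivWithinAt i hi x t ht).congr
        (fun s hs => by rw [extendByFlow_of_le (hsub s hs)])
        (by rw [extendByFlow_of_le (hsub t ht)])
    · rw [extendByFlow_of_ge hΦ.1 ht.1]
      exact (hΦ.hasDerivAt_sub _ _ t).hasDerivWithinAt.congr
        (fun s hs => by rw [extendByFlow_of_ge hΦ.1 hs.1]; rfl)
        (by rw [extendByFlow_of_ge hΦ.1 ht.1]; rfl)

end IsLagrangianRep

theorem Scheme1.exists_isLagrangianRep {n : ℕ} {p L M K : ℝ}
    {v : Measure (En n) → En n → En n} (hH : HypH n p v L M K) {μ₀ : Measure (En n)}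
    (hμ₀ : MemM n μ₀) {Δ T : ℝ} {μ : ℝ → Measure (En n)} (hμ : Scheme1 n v μ₀ Δ T μ)
    (hΔ : 0 ≤ Δ) : ∀ N : ℕ, N * Δ ≤ T → ∃ X, IsLagrangianRep n v μ₀ Δ N μ X
  | 0, _ => ⟨_, .zero hμ.1 hμ₀⟩
  | N + 1, hN => by
    push_cast at hN
    have hNT : (N : ℝ) * Δ ≤ T := by nlinarith
    obtain ⟨X, hX⟩ := exists_isLagrangianRep hH hμ₀ hμ hΔ N hNT
    have hw := hH.lipschitzWith (hX.memM N le_rfl)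
    obtain ⟨Φ, hΦ, -⟩ := hμ.2 N (N * Δ) le_rfl (by nlinarith) hNT
    refine ⟨_, hX.succ hΔ hw hΦ fun t ht => ?_⟩
    obtain ⟨Ψ, hΨ, hμt⟩ := hμ.2 N t ht.1 ht.2 (ht.2.trans hN)
    rw [hμt, hΨ.unique hw hΦ]

namespace IsLagrangianRep

variable {n : ℕ} {p L M K : ℝ} {v : Measure (En n) → En n → En n} {μ₀ : Measure (En n)}
  {Δ δ : ℝ} {N N' : ℕ} {μ ν : ℝ → Measure (En n)} {X Y : ℝ → En n → En n}

theorem norm_sub_le_gronwallBound (hH : HypH n p v L M K) (hp : 0 < p)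
    [IsProbabilityMeasure μ₀] (hX : IsLagrangianRep n v μ₀ Δ N μ X)
    (hY : IsLagrangianRep n v μ₀ δ N' ν Y) (hΔ : 0 ≤ Δ) (hδ : 0 ≤ δ) {i j : ℕ} (hi : i < N)
    (hj : j < N') (hij : i * Δ ≤ j * δ) (hji : (j + 1) * δ ≤ (i + 1) * Δ) {e : ℝ}
    (he : ∀ x, ‖X (j * δ) x - Y (j * δ) x‖ ≤ e) :
    ∀ t ∈ Icc (j * δ) ((j + 1) * δ), ∀ x,
      ‖X t x - Y t x‖ ≤ gronwallBound e L (K * (e + M * Δ)) (t - j * δ) := by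
  have hμi := hX.memM i hi.le
  have hw := hH.lipschitzWith hμi
  obtain ⟨hL, hM, hK, -, -, hvM, hvW⟩ := hH
  have hJI : Icc (j * δ) ((j + 1) * δ) ⊆ Icc (i * Δ) ((i + 1) * Δ) :=
    Icc_subset_Icc (hij.trans (by nlinarith)) hji
  have hiΔ : (i : ℝ) * Δ ∈ Icc 0 (N * Δ) := ⟨by positivity, by gcongr⟩
  have hjδ : (j : ℝ) * δ ∈ Icc 0 (N' * δ) := ⟨by positivity, by gcongr⟩
  have hXd := hX.hasDerivWithinAt i hi
  have hYd := hY.hasDerivWithinAt j hj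
  have he0 : 0 ≤ e := (norm_nonneg _).trans (he 0)
  have hdrift : ∀ x, ‖X (i * Δ) x - X (j * δ) x‖ ≤ M * Δ := by
    intro x
    have := (convex_Icc _ _).norm_image_sub_le_of_norm_hasDerivWithin_le (hXd x)
      (fun t _ => hvM _ hμi _) ⟨hij, by nlinarith⟩ ⟨le_rfl, by nlinarith⟩
    rw [Real.norm_of_nonpos (sub_nonpos.2 hij)] at this
    nlinarith
  have hW : Wp n p (ν (j * δ)) (μ (i * Δ)) ≤ e + M * Δ := by
    rw [hY.map_eq _ hjδ, hX.map_eq _ hiΔ]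
    refine Wp_map_le_s9 hp (hY.continuous _ hjδ) (hY.injective _ hjδ)
      (hX.continuous _ hiΔ).measurable (by positivity) fun x => ?_
    calc ‖X (i * Δ) x - Y (j * δ) x‖
        ≤ ‖X (i * Δ) x - X (j * δ) x‖ + ‖X (j * δ) x - Y (j * δ) x‖ :=
          norm_sub_le_norm_sub_add_norm_sub _ _ _
      _ ≤ e + M * Δ := by linarith [hdrift x, he x]
  intro t ht x
  have := dist_le_of_approx_trajectories_ODE (v := fun _ => v (μ (i * Δ)))
    (f := fun s => X s x) (g := fun s => Y s x) (f' := fun s => v (μ (i * Δ)) (X s x))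
    (g' := fun s => v (ν (j * δ)) (Y s x)) (εf := 0) (εg := K * (e + M * Δ)) (δ := e)
    (fun _ => hw)
    (fun s hs => ((hXd x s (hJI hs)).mono hJI).continuousWithinAt)
    (fun s hs => ((hXd x s (hJI (Ico_subset_Icc_self hs))).mono hJI).mono_of_mem_nhdsWithin
      (Icc_mem_nhdsGE_of_mem hs))
    (fun s _ => by simp)
    (fun s hs => (hYd x s hs).continuousWithinAt)
    (fun s hs => (hYd x s (Ico_subset_Icc_self hs)).mono_of_mem_nhdsWithin
      (Icc_mem_nhdsGE_of_mem hs))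
    (fun s _ => by
      rw [dist_eq_norm]
      exact (hvW _ _ (hY.memM j hj.le) hμi _).trans (by gcongr))
    (by rw [dist_eq_norm]; exact he x) t ht
  rwa [dist_eq_norm, Real.coe_toNNReal _ hL.le, zero_add] at this

theorem norm_sub_le (hH : HypH n p v L M K) (hp : 0 < p) [IsProbabilityMeasure μ₀]
    (hX : IsLagrangianRep n v μ₀ Δ N μ X) (hY : IsLagrangianRep n v μ₀ δ N' ν Y)
    (hΔ : 0 ≤ Δ) (hδ : 0 ≤ δ)
    (hnest : ∀ j < N', ∃ i < N, i * Δ ≤ j * δ ∧ (j + 1) * δ ≤ (i + 1) * Δ) :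
    ∀ t ∈ Icc 0 (N' * δ), ∀ x, ‖X t x - Y t x‖ ≤ M * Δ * (Real.exp ((L + K) * t) - 1) := by
  obtain ⟨hL, hM, hK, -⟩ := id hH
  suffices ∀ j ≤ N', ∀ t ∈ Icc 0 (j * δ), ∀ x,
      ‖X t x - Y t x‖ ≤ M * Δ * (Real.exp ((L + K) * t) - 1) from this N' le_rfl
  intro j
  induction j with
  | zero =>
    intro _ t ht x
    obtain rfl : t = 0 := by simpa using ht
    simp [hX.apply_zero, hY.apply_zero]
  | succ j ih =>
    intro hj t ht x
    push_cast at ht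
    rcases le_total t (j * δ) with htj | htj
    · exact ih (Nat.le_of_succ_le hj) t ⟨ht.1, htj⟩ x
    obtain ⟨i, hi, hij, hji⟩ := hnest j hj
    set E := Real.exp ((L + K) * (j * δ)) with hE
    have hgron := hX.norm_sub_le_gronwallBound hH hp hY hΔ hδ hi hj hij hji
      (ih (Nat.le_of_succ_le hj) (j * δ) ⟨by positivity, le_rfl⟩) t ⟨htj, ht.2⟩ x
    rw [show M * Δ * (E - 1) + M * Δ = M * Δ * E by ring] at hgron
    have hexp := gronwallBound_add_sub_le (c := M * Δ * (E - 1)) (D := M * Δ * E) hL hK.le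
      (by linarith [mul_nonneg hM.le hΔ]) (by positivity) (sub_nonneg.2 htj)
    calc ‖X t x - Y t x‖ ≤ M * Δ * E * Real.exp ((L + K) * (t - j * δ)) - M * Δ := by
          linarith
      _ = M * Δ * (Real.exp ((L + K) * t) - 1) := by
        rw [hE, mul_assoc, ← Real.exp_add]; ring_nf

end IsLagrangianRep

theorem exists_dyadic_step_superset {T : ℝ} (hT : 0 ≤ T) {k l : ℕ} (hkl : k ≤ l) :
    ∀ j < (2 ^ l : ℕ), ∃ i < (2 ^ k : ℕ), (i : ℝ) * (T / 2 ^ k) ≤ j * (T / 2 ^ l) ∧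
      (j + 1) * (T / 2 ^ l) ≤ (i + 1) * (T / 2 ^ k) := by
  intro j hj
  set m := 2 ^ (l - k)
  have hm : 0 < m := by positivity
  have hlk : (2 : ℝ) ^ l = 2 ^ k * m := by
    simp only [m]
    push_cast
    rw [← pow_add, Nat.add_sub_cancel' hkl]
  have hΔ : T / 2 ^ k = m * (T / 2 ^ l) := by
    rw [hlk]; field_simp
  have hlo : (j / m * m : ℕ) ≤ j := Nat.div_mul_le_self j m
  have hhi : j + 1 ≤ (j / m + 1) * m := (Nat.div_lt_iff_lt_mul hm).1 (Nat.lt_succ_self _)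
  refine ⟨j / m, (Nat.div_lt_iff_lt_mul hm).2 ?_, ?_, ?_⟩
  · rwa [← pow_add, Nat.add_sub_cancel' hkl]
  · rw [hΔ, ← mul_assoc]
    gcongr
    exact_mod_cast hlo
  · rw [hΔ, ← mul_assoc]
    gcongr
    exact_mod_cast hhi

theorem Scheme1.Wp_le_of_le {n : ℕ} {p L M K T : ℝ} {v : Measure (En n) → En n → En n}
    (hH : HypH n p v L M K) (hp : 0 < p) {μ₀ : Measure (En n)} (hμ₀ : MemM n μ₀)
    (hT : 0 ≤ T) {k l : ℕ} (hkl : k ≤ l) {μ ν : ℝ → Measure (En n)}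
    (hμ : Scheme1 n v μ₀ (T / 2 ^ k) T μ) (hν : Scheme1 n v μ₀ (T / 2 ^ l) T ν) :
    ∀ t ∈ Icc 0 T,
      Wp n p (μ t) (ν t) ≤ M * (T / 2 ^ k) * (Real.exp ((L + K) * T) - 1) ∧
      Wp n p (ν t) (μ t) ≤ M * (T / 2 ^ k) * (Real.exp ((L + K) * T) - 1) := by
  obtain ⟨hL, hM, hK, -⟩ := id hH
  have : IsProbabilityMeasure μ₀ := hμ₀.1
  have hsteps : ∀ k : ℕ, ((2 ^ k : ℕ) : ℝ) * (T / 2 ^ k) = T := fun k => by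
    push_cast; field_simp
  obtain ⟨X, hX⟩ := hμ.exists_isLagrangianRep hH hμ₀ (by positivity) (2 ^ k) (hsteps k).le
  obtain ⟨Y, hY⟩ := hν.exists_isLagrangianRep hH hμ₀ (by positivity) (2 ^ l) (hsteps l).le
  intro t ht
  have htX : t ∈ Icc 0 ((2 ^ k : ℕ) * (T / 2 ^ k)) := by rwa [hsteps k]
  have htY : t ∈ Icc 0 ((2 ^ l : ℕ) * (T / 2 ^ l)) := by rwa [hsteps l]
  have hXY : ∀ x, ‖X t x - Y t x‖ ≤ M * (T / 2 ^ k) * (Real.exp ((L + K) * T) - 1) := by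
    intro x
    refine (hX.norm_sub_le hH hp hY (by positivity) (by positivity)
      (exists_dyadic_step_superset hT hkl) t htY x).trans ?_
    gcongr
    exact ht.2
  have hC : 0 ≤ M * (T / 2 ^ k) * (Real.exp ((L + K) * T) - 1) :=
    (norm_nonneg _).trans (hXY 0)
  rw [hX.map_eq t htX, hY.map_eq t htY]
  exact ⟨Wp_map_le_s9 hp (hX.continuous t htX) (hX.injective t htX)
      (hY.continuous t htY).measurable hC fun x => norm_sub_rev (X t x) _ ▸ hXY x,
    Wp_map_le_s9 hp (hY.continuous t htY) (hY.injective t htY)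
      (hX.continuous t htX).measurable hC hXY⟩

/-- The approximations `μᵏ` produced by Scheme 1 with `Δt = T/2ᵏ` form a Cauchy
sequence in `C([0,T], 𝓜)` for the distance `d(μ,ν) = sup_{t∈[0,T]} W_p(μₜ,νₜ)`. -/
theorem stmt9 (n : ℕ) (p T : ℝ) (hp : 1 ≤ p) (hT : 0 < T)
    (v : Measure (En n) → En n → En n) (L M K : ℝ) (hH : HypH n p v L M K)
    (μ₀ : Measure (En n)) (hμ₀ : MemM n μ₀)
    (μseq : ℕ → ℝ → Measure (En n))
    (hscheme : ∀ k : ℕ, Scheme1 n v μ₀ (T / 2 ^ k) T (μseq k)) :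
    ∀ ε > 0, ∃ N : ℕ, ∀ k ≥ N, ∀ l ≥ N, ∀ t ∈ Icc (0 : ℝ) T,
      Wp n p (μseq k t) (μseq l t) ≤ ε := by
  intro ε hε
  obtain ⟨hL, hM, hK, -⟩ := id hH
  set C := M * T * (Real.exp ((L + K) * T) - 1)
  have hC : 0 < C := mul_pos (by positivity) (sub_pos.2 (Real.one_lt_exp_iff.2 (by positivity)))
  obtain ⟨N, hN⟩ := exists_pow_lt_of_lt_one (div_pos hε hC) (by norm_num : (1 / 2 : ℝ) < 1)
  have hsmall : ∀ m ≥ N, M * (T / 2 ^ m) * (Real.exp ((L + K) * T) - 1) ≤ ε := by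
    intro m hm
    calc M * (T / 2 ^ m) * (Real.exp ((L + K) * T) - 1) = C * (1 / 2) ^ m := by
          rw [one_div_pow]; ring
      _ ≤ C * (1 / 2) ^ N :=
        mul_le_mul_of_nonneg_left (pow_le_pow_of_le_one (by norm_num) (by norm_num) hm) hC.le
      _ ≤ ε := (lt_div_iff₀' hC).1 hN |>.le
  refine ⟨N, fun k hk l hl t ht => ?_⟩
  rcases le_total k l with hkl | hlk
  · exact ((hscheme k).Wp_le_of_le hH (by linarith) hμ₀ hT.le hkl (hscheme l) t ht).1.trans
      (hsmall k hk)
  · exact ((hscheme l).Wp_le_of_le hH (by linarith) hμ₀ hT.le hlk (hscheme k) t ht).2.trans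
      (hsmall l hl)

end
end

section
/- Let η : ℝⁿ → [0,∞) be a Lipschitz function with constant L, with support contained in the ball B_R(0). For μ ∈ M define v[μ](x) = ∫_{ℝⁿ} (x−y) η(x−y) dμ(y). Then for all μ, ν ∈ M: sup_{x∈ℝⁿ} |v[μ](x) − v[ν](x)| ≤ R L · W₁(μ, ν), i.e. v is Lipschitz from (M, W₁) to (C⁰, sup norm). (The key intermediate fact is that for each fixed x the map y ↦ (x−y)η(x−y) is Lipschitz with constant R L, so the Kantorovich–Rubinstein duality formula applies.) -/
open MeasureTheory Set
open scoped RealInnerProductSpace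

noncomputable section

/-! For fixed `x`, `g y = η (x - y) • (x - y)` is `R L`-Lipschitz: `η` vanishes on the sphere of
radius `R`, so `|η u| ≤ L (R - ‖u‖)` inside the ball, and for `‖v‖ ≤ ‖u‖` the splitting
`η u • u - η v • v = η u • (u - v) + (η u - η v) • v` gives `‖η u • u - η v • v‖ ≤ R L ‖u - v‖`.
Hence for every transport map `γ` with `γ#μ = ν`, `∫ g dμ - ∫ g dν = ∫ (g - g ∘ γ) dμ` has norm at
most `R L ∫ ‖γ z - z‖ dμ`, and the claim follows on taking the infimum over `γ`. As `sInf ∅ = 0`,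
this needs a transport map to exist: after a Borel embedding into `ℝ`, an atomless probability
measure is pushed to the uniform measure on `[0, 1]` by its distribution function, and the uniform
measure is pushed onto any probability measure. -/

open Filter ProbabilityTheory
open scoped Topology unitInterval

section Kernel

variable {E : Type*} [NormedAddCommGroup E] {η : E → ℝ} {L R : ℝ}

lemma eq_zero_of_le_norm (hsupp : Function.support η ⊆ Metric.ball 0 R) {u : E}
    (hu : R ≤ ‖u‖) : η u = 0 :=
  Function.notMem_support.mp fun h => (mem_ball_zero_iff.mp (hsupp h)).not_ge hu

variable [NormedSpace ℝ E]

lemma exists_norm_eq_norm_sub_eq [Nontrivial E] {u : E} (hu : ‖u‖ ≤ R) :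
    ∃ w : E, ‖w‖ = R ∧ ‖u - w‖ = R - ‖u‖ := by
  rcases eq_or_ne u 0 with rfl | hu0
  · obtain ⟨w, hw⟩ := exists_norm_eq E ((norm_nonneg (0 : E)).trans hu)
    exact ⟨w, hw, by simp [hw]⟩
  have hpos : 0 < ‖u‖ := norm_pos_iff.mpr hu0
  refine ⟨(R / ‖u‖) • u, ?_, ?_⟩
  · rw [norm_smul, Real.norm_of_nonneg (div_nonneg (hpos.le.trans hu) hpos.le),
      div_mul_cancel₀ _ hpos.ne']
  · rw [show u - (R / ‖u‖) • u = -((R / ‖u‖ - 1) • u) by module, norm_neg, norm_smul,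
      Real.norm_of_nonneg (sub_nonneg.2 ((one_le_div hpos).2 hu)), sub_mul,
      div_mul_cancel₀ _ hpos.ne', one_mul]

lemma abs_le_mul_sub_norm [Nontrivial E] (hηL : ∀ x y, |η x - η y| ≤ L * ‖x - y‖)
    (hsupp : Function.support η ⊆ Metric.ball 0 R) {u : E} (hu : ‖u‖ ≤ R) :
    |η u| ≤ L * (R - ‖u‖) := by
  obtain ⟨w, hw, huw⟩ := exists_norm_eq_norm_sub_eq hu
  simpa [eq_zero_of_le_norm hsupp hw.ge, huw] using hηL u w

lemma norm_smul_sub_smul_le_of_norm_le [Nontrivial E] (hR : 0 ≤ R)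
    (hηL : ∀ x y, |η x - η y| ≤ L * ‖x - y‖) (hsupp : Function.support η ⊆ Metric.ball 0 R)
    {u v : E} (hvu : ‖v‖ ≤ ‖u‖) :
    ‖η u • u - η v • v‖ ≤ R * L * ‖u - v‖ := by
  obtain ⟨e, he⟩ := exists_ne (0 : E)
  have hL : 0 ≤ L := by
    have h := (abs_nonneg (η e - η 0)).trans (hηL e 0)
    rw [sub_zero] at h
    exact nonneg_of_mul_nonneg_left h (norm_pos_iff.2 he)
  rcases le_or_gt R ‖v‖ with hv | hv
  · simp [eq_zero_of_le_norm hsupp hv, eq_zero_of_le_norm hsupp (hv.trans hvu)]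
    positivity
  have hu : |η u| ≤ L * (R - ‖v‖) := by
    rcases le_or_gt ‖u‖ R with hu | hu
    · exact (abs_le_mul_sub_norm hηL hsupp hu).trans (by gcongr)
    · rw [eq_zero_of_le_norm hsupp hu.le, abs_zero]
      exact mul_nonneg hL (sub_nonneg.2 hv.le)
  calc ‖η u • u - η v • v‖ = ‖η u • (u - v) + (η u - η v) • v‖ := by congr 1; module
    _ ≤ |η u| * ‖u - v‖ + |η u - η v| * ‖v‖ := by
      simpa only [norm_smul, Real.norm_eq_abs] using norm_add_le (η u • (u - v)) ((η u - η v) • v)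
    _ ≤ L * (R - ‖v‖) * ‖u - v‖ + L * ‖u - v‖ * ‖v‖ := by gcongr; exact hηL u v
    _ = R * L * ‖u - v‖ := by ring

lemma norm_smul_sub_smul_le (hR : 0 ≤ R) (hηL : ∀ x y, |η x - η y| ≤ L * ‖x - y‖)
    (hsupp : Function.support η ⊆ Metric.ball 0 R) (u v : E) :
    ‖η u • u - η v • v‖ ≤ R * L * ‖u - v‖ := by
  rcases subsingleton_or_nontrivial E with hE | hE
  · simp [Subsingleton.elim u v]
  rcases le_total ‖v‖ ‖u‖ with h | h
  · exact norm_smul_sub_smul_le_of_norm_le hR hηL hsupp h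
  · rw [norm_sub_rev, norm_sub_rev u]
    exact norm_smul_sub_smul_le_of_norm_le hR hηL hsupp h

end Kernel

section Transport

def cdfUnitInterval (ρ : Measure ℝ) (y : ℝ) : I := ⟨cdf ρ y, cdf_nonneg ρ y, cdf_le_one ρ y⟩

lemma measurable_cdfUnitInterval (ρ : Measure ℝ) : Measurable (cdfUnitInterval ρ) :=
  (monotone_cdf ρ).measurable.subtype_mk

variable (ρ : Measure ℝ) [IsProbabilityMeasure ρ]

lemma continuous_cdf [NullSingletonClass ρ] : Continuous (cdf ρ) := by
  refine continuous_iff_continuousAt.2 fun x => ?_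
  rw [(monotone_cdf ρ).continuousAt_iff_leftLim_eq_rightLim, StieltjesFunction.rightLim_eq]
  have h := (cdf ρ).measure_singleton x
  rw [measure_cdf, measure_singleton, eq_comm, ENNReal.ofReal_eq_zero] at h
  linarith [(monotone_cdf ρ).leftLim_le (le_refl x)]

lemma measure_cdf_le [NullSingletonClass ρ] {c : ℝ} (hc0 : 0 ≤ c) (hc1 : c < 1) :
    ρ {y | cdf ρ y ≤ c} = ENNReal.ofReal c := by
  set S := {y | cdf ρ y ≤ c}
  rcases S.eq_empty_or_nonempty with hS | hS
  · have hc : c = 0 := by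
      refine le_antisymm (not_lt.1 fun hc => ?_) hc0
      obtain ⟨y, hy⟩ := ((tendsto_cdf_atBot ρ).eventually_lt_const hc).exists
      exact hS.subset hy.le
    simp [hS, hc]
  have hbdd : BddAbove S := by
    obtain ⟨b, hb⟩ := ((tendsto_cdf_atTop ρ).eventually_const_lt hc1).exists_forall_of_atTop
    exact ⟨b, fun y hy => not_lt.1 fun hby => (hb y hby.le).not_ge hy⟩
  have hsS : sSup S ∈ S :=
    (isClosed_le (continuous_cdf ρ) continuous_const).csSup_mem hS hbdd
  have hSs : S = Iic (sSup S) :=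
    Subset.antisymm (fun y hy => le_csSup hbdd hy) fun y hy => (monotone_cdf ρ hy).trans hsS
  have hcs : c ≤ cdf ρ (sSup S) :=
    ge_of_tendsto ((continuous_cdf ρ).tendsto _ |>.mono_left nhdsWithin_le_nhds)
      (eventually_nhdsWithin_of_forall (s := Ioi (sSup S)) fun y hy =>
        (not_le.1 fun h => hy.not_ge (le_csSup hbdd h)).le)
  rw [hSs, ← ofReal_cdf, le_antisymm hsS hcs]

lemma map_cdfUnitInterval_eq_volume [NullSingletonClass ρ] :
    ρ.map (cdfUnitInterval ρ) = volume := by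
  have := Measure.isProbabilityMeasure_map (μ := ρ) (measurable_cdfUnitInterval ρ).aemeasurable
  refine Measure.ext_of_Iic _ _ fun x => ?_
  rw [Measure.map_apply (measurable_cdfUnitInterval ρ) measurableSet_Iic, unitInterval.volume_Iic]
  rcases x.2.2.lt_or_eq with hx | hx
  · exact measure_cdf_le ρ x.2.1 hx
  · have : cdfUnitInterval ρ ⁻¹' Iic x = univ :=
      eq_univ_of_forall fun y => show cdf ρ y ≤ x from hx ▸ cdf_le_one ρ y
    simp [this, hx]

end Transport

lemma exists_measurable_map_eq_of_nullSingletonClass {α β : Type*} [MeasurableSpace α]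
    [StandardBorelSpace α] [MeasurableSpace β] [StandardBorelSpace β] [Nonempty β]
    (μ : Measure α) [IsProbabilityMeasure μ] [NullSingletonClass μ]
    (ν : Measure β) [IsProbabilityMeasure ν] :
    ∃ γ : α → β, Measurable γ ∧ μ.map γ = ν := by
  have he := measurableEmbedding_embeddingReal α
  set ρ := μ.map (embeddingReal α)
  have : IsProbabilityMeasure ρ := Measure.isProbabilityMeasure_map he.measurable.aemeasurable
  have : NullSingletonClass ρ := ⟨fun x => by
    rw [he.map_apply]
    exact (subsingleton_singleton.preimage he.injective).measure_zero μ⟩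
  obtain ⟨f, hf, hfν⟩ := ν.exists_measurable_map_eq
  refine ⟨f ∘ cdfUnitInterval ρ ∘ embeddingReal α,
    hf.comp ((measurable_cdfUnitInterval ρ).comp he.measurable), ?_⟩
  rw [← Measure.map_map hf ((measurable_cdfUnitInterval ρ).comp he.measurable),
    ← Measure.map_map (measurable_cdfUnitInterval ρ) he.measurable,
    map_cdfUnitInterval_eq_volume, hfν]

lemma exists_measurable_map_eq_of_absolutelyContinuous {n : ℕ} {μ ν : Measure (En n)}
    [IsProbabilityMeasure μ] [IsProbabilityMeasure ν] (hμ : μ ≪ volume) :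
    ∃ γ : En n → En n, Measurable γ ∧ μ.map γ = ν := by
  rcases subsingleton_or_nontrivial (En n) with hn | hn
  · refine ⟨id, measurable_id, Measure.ext fun s _ => ?_⟩
    rcases s.eq_empty_or_nonempty with rfl | hs
    · simp
    · simp [Measure.map_id, hs.eq_univ]
  · have : NullSingletonClass μ := ⟨fun x => hμ (measure_singleton x)⟩
    exact exists_measurable_map_eq_of_nullSingletonClass μ ν

section Wasserstein

variable {E : Type*} [NormedAddCommGroup E] [MeasurableSpace E] {μ : Measure E} {γ : E → E}

lemma integrable_norm_sub_of_isCompact [BorelSpace E] [SecondCountableTopology E]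
    [IsFiniteMeasure μ] (hγ : Measurable γ) {K K' : Set E} (hK : IsCompact K) (hK' : IsCompact K')
    (hμK : μ Kᶜ = 0) (hνK' : μ.map γ K'ᶜ = 0) :
    Integrable (fun z => ‖γ z - z‖) μ := by
  obtain ⟨C, hC⟩ := hK.isBounded.subset_closedBall 0
  obtain ⟨C', hC'⟩ := hK'.isBounded.subset_closedBall 0
  have hγK' : ∀ᵐ z ∂μ, γ z ∈ K' := ae_of_ae_map hγ.aemeasurable (mem_ae_iff.2 hνK')
  refine Integrable.of_bound (hγ.sub measurable_id).norm.aestronglyMeasurable (C' + C) ?_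
  filter_upwards [mem_ae_iff.2 hμK, hγK'] with z hz hγz
  rw [norm_norm]
  exact (norm_sub_le _ _).trans (add_le_add (mem_closedBall_zero_iff.1 (hC' hγz))
    (mem_closedBall_zero_iff.1 (hC hz)))

lemma norm_integral_sub_integral_map_le {F : Type*} [NormedAddCommGroup F] [NormedSpace ℝ F]
    {g : E → F} {K : ℝ} (hg : ∀ a b, ‖g a - g b‖ ≤ K * ‖a - b‖) (hγ : AEMeasurable γ μ)
    (hgμ : Integrable g μ) (hgν : Integrable g (μ.map γ))
    (hcost : Integrable (fun z => ‖γ z - z‖) μ) :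
    ‖∫ z, g z ∂μ - ∫ z, g z ∂μ.map γ‖ ≤ K * ∫ z, ‖γ z - z‖ ∂μ := by
  have hgγ : Integrable (fun z => g (γ z)) μ := hgν.comp_aemeasurable hγ
  rw [integral_map hγ hgν.aestronglyMeasurable, ← integral_sub hgμ hgγ, ← integral_const_mul]
  refine (norm_integral_le_integral_norm _).trans (integral_mono_of_nonneg
    (ae_of_all _ fun _ => norm_nonneg _) (hcost.const_mul K) (ae_of_all _ fun z => ?_))
  simpa [norm_sub_rev z] using hg z (γ z)

end Wasserstein

lemma le_mul_csInf_of_forall_le_mul {S : Set ℝ} {a K : ℝ} (hne : S.Nonempty) (hbdd : BddBelow S)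
    (h : ∀ c ∈ S, a ≤ K * c) : a ≤ K * sInf S := by
  rcases le_or_gt 0 K with hK | hK
  · rw [← smul_eq_mul, ← Real.sInf_smul_of_nonneg hK]
    exact le_csInf hne.smul_set (by rintro _ ⟨c, hc, rfl⟩; exact h c hc)
  · obtain ⟨c, hc⟩ := hne
    exact (h c hc).trans (mul_le_mul_of_nonpos_left (csInf_le hbdd hc) hK.le)

theorem stmt18_general (n : ℕ) (L R : ℝ) (hR : 0 < R)
    (η : En n → ℝ)
    (hηL : ∀ x y, |η x - η y| ≤ L * ‖x - y‖)
    (hsupp : Function.support η ⊆ Metric.ball (0 : En n) R)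
    (μ ν : Measure (En n)) (hμ : MemM n μ) (hν : MemM n ν) :
    ∀ x : En n,
      ‖(∫ y, η (x - y) • (x - y) ∂μ) - (∫ y, η (x - y) • (x - y) ∂ν)‖ ≤
        R * L * Wp n 1 μ ν := by
  intro x
  obtain ⟨hμp, hμac, K, hK, hμK⟩ := hμ
  obtain ⟨hνp, -, K', hK', hνK'⟩ := hν
  set g : En n → En n := fun y => η (x - y) • (x - y)
  have hg : ∀ a b, ‖g a - g b‖ ≤ R * L * ‖a - b‖ := fun a b => by
    have h := norm_smul_sub_smul_le hR.le hηL hsupp (x - a) (x - b)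
    rwa [sub_sub_sub_cancel_left, norm_sub_rev b] at h
  have hgint : ∀ (θ : Measure (En n)) [IsFiniteMeasure θ], Integrable g θ := fun θ _ =>
    (LipschitzWith.of_dist_le' (by simpa only [dist_eq_norm] using hg)).continuous
      |>.integrable_of_hasCompactSupport <| HasCompactSupport.intro (isCompact_closedBall x R)
        fun y hy => by
          have hxy : R ≤ ‖x - y‖ := by
            rw [← dist_eq_norm']
            exact (not_le.1 (mt Metric.mem_closedBall.2 hy)).le
          simp only [g, eq_zero_of_le_norm hsupp hxy, zero_smul]
  refine le_mul_csInf_of_forall_le_mul ?_ ⟨0, ?_⟩ ?_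
  · obtain ⟨γ, hγ, hγν⟩ := exists_measurable_map_eq_of_absolutelyContinuous (ν := ν) hμac
    exact ⟨_, γ, hγ, hγν, rfl⟩
  · rintro _ ⟨γ, -, -, rfl⟩
    exact Real.rpow_nonneg (integral_nonneg fun _ => by positivity) _
  · rintro _ ⟨γ, hγ, rfl, rfl⟩
    simp only [Real.rpow_one, div_one]
    exact norm_integral_sub_integral_map_le hg hγ.aemeasurable (hgint μ) (hgint _)
      (integrable_norm_sub_of_isCompact hγ hK hK' hμK hνK')

/-- The map `μ ↦ v[μ]` with `v[μ](x) = ∫ (x-y)η(x-y) dμ(y)` is Lipschitz from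
`(𝓜, W₁)` to `(C⁰, sup norm)` with constant `R L`:
`sup_x ‖v[μ](x) - v[ν](x)‖ ≤ R L W₁(μ,ν)`. -/
theorem stmt18 (n : ℕ) (L R : ℝ) (hR : 0 < R)
    (η : En n → ℝ) (hη0 : ∀ x, 0 ≤ η x)
    (hηL : ∀ x y, |η x - η y| ≤ L * ‖x - y‖)
    (hsupp : Function.support η ⊆ Metric.ball (0 : En n) R)
    (μ ν : Measure (En n)) (hμ : MemM n μ) (hν : MemM n ν) :
    ∀ x : En n,
      ‖(∫ y, η (x - y) • (x - y) ∂μ) - (∫ y, η (x - y) • (x - y) ∂ν)‖ ≤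
        R * L * Wp n 1 μ ν :=
  stmt18_general n L R hR η hηL hsupp μ ν hμ hν
end
end
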